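/- With G̃ as defined, let I ⊆ {0,...,n-1} with |I| = k, write I = I_1 ∪ I_2 with I_1 = I ∩ {0,...,k-1} and I_2 = I ∩ {k,...,n-1}, and for ℓ ∈ I_2 write ℓ̃ = ℓ - k. Then for 0 ≤ j' ≤ i ≤ k-1, the (i, j') q × q block of G̃_I · G̃_Iᵀ equals (Σ_{ℓ ∈ I_2} r_{i,ℓ̃}²)·I_q + 1_{i ∈ I_1}·I_q when i = j', and equals Σ_{ℓ ∈ I_2} r_{i,ℓ̃}·r_{j',ℓ̃}·U^{a_{ℓ̃}(b_i - b_{j'})} when i > j' (the matrix being symmetric, this determines all blocks). -/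

import Mathlib

open Matrix

/-- blocks of `G̃_I · G̃_Iᵀ`.  Writing `G̃_I · G̃_Iᵀ` as the sum over
`ℓ ∈ I` of the Gram matrices of the block-columns of `G̃`, the diagonal `(i,i)` block
equals `(Σ_{ℓ ∈ I₂} r_{i,ℓ̃}² + 1_{i ∈ I₁})·I_q` and, for `i > j'`, the `(i,j')`
block equals `Σ_{ℓ ∈ I₂} r_{i,ℓ̃}·r_{j',ℓ̃}·U^{a_{ℓ̃}(b_i - b_{j'})}`. -/
theorem gram_blocks_of_GI
    (k s q : ℕ) (hk : 0 < k) (hs : 0 < s) (hq : 0 < q)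
    (a : Fin s → ℕ) (b : Fin k → ℕ) (ha : StrictMono a) (hb : StrictMono b)
    (r : Fin k → Fin s → ℝ)
    (U : Matrix (Fin q) (Fin q) ℝ)
    (hU : ∀ (m l : Fin q), U m l = if (l : ℕ) = (m : ℕ) + 1 then 1 else 0)
    (Gmsg : Fin k → Matrix (Fin k × Fin q) (Fin q) ℝ)
    (hGmsg : ∀ (ℓ : Fin k) (i : Fin k) (m : Fin q) (c : Fin q),
      Gmsg ℓ (i, m) c = if i = ℓ ∧ m = c then 1 else 0)
    (Gpar : (j : Fin s) → Matrix (Fin k × Fin q) (Fin (q + a j * b ⟨k - 1, by omega⟩)) ℝ)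
    (hGpar : ∀ (j : Fin s) (i : Fin k) (m : Fin q)
        (c : Fin (q + a j * b ⟨k - 1, by omega⟩)),
      Gpar j (i, m) c = r i j * (if (c : ℕ) = a j * b i + (m : ℕ) then 1 else 0))
    (I : Finset (Fin (k + s))) (hI : I.card = k)
    (B : Matrix (Fin k × Fin q) (Fin k × Fin q) ℝ)
    (hB : B = ∑ ℓ ∈ I,
      if hℓ : (ℓ : ℕ) < k
        then Gmsg ⟨(ℓ : ℕ), hℓ⟩ * (Gmsg ⟨(ℓ : ℕ), hℓ⟩)ᵀ
        else (fun P => P * Pᵀ) (Gpar ⟨(ℓ : ℕ) - k, by have := ℓ.isLt; omega⟩)) :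
    (∀ i : Fin k,
      (Matrix.of fun m l : Fin q => B (i, m) (i, l)) =
        ((∑ j : Fin s, if Fin.natAdd k j ∈ I then (r i j) ^ 2 else 0)
          + (if Fin.castAdd s i ∈ I then 1 else 0)) • (1 : Matrix (Fin q) (Fin q) ℝ))
    ∧ (∀ i j' : Fin k, j' < i →
      (Matrix.of fun m l : Fin q => B (i, m) (j', l)) =
        ∑ j : Fin s, if Fin.natAdd k j ∈ I
          then (r i j * r j' j) • U ^ (a j * (b i - b j'))
          else (0 : Matrix (Fin q) (Fin q) ℝ)) := by
  -- powers of the shift matrix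
  have hUpow : ∀ (p : ℕ) (m l : Fin q),
      (U ^ p) m l = if (l : ℕ) = (m : ℕ) + p then 1 else 0 := by
    intro p
    induction p with
    | zero =>
      intro m l
      simp [Matrix.one_apply, Fin.ext_iff, eq_comm]
    | succ p ih =>
      intro m l
      rw [pow_succ, Matrix.mul_apply]
      by_cases h : (m : ℕ) + p < q
      · rw [Finset.sum_eq_single (⟨(m : ℕ) + p, h⟩ : Fin q)]
        · rw [ih, hU]; simp [Nat.add_assoc]
        · intro c _ hc
          rw [ih]
          have hc' : ¬ ((c : ℕ) = (m : ℕ) + p) := fun hcc => hc (Fin.ext hcc)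
          simp [hc']
        · simp
      · have hl := l.isLt
        rw [if_neg (by omega)]
        apply Finset.sum_eq_zero
        intro c _
        have hc := c.isLt
        rw [ih]
        have : ¬ ((c : ℕ) = (m : ℕ) + p) := by omega
        simp [this]
  -- monotonicity bound for b
  have hble : ∀ i : Fin k, b i ≤ b ⟨k - 1, by omega⟩ := by
    intro i
    apply hb.monotone
    rw [Fin.le_def]
    have := i.isLt
    simp
    omega
  -- entrywise formula for B
  have hBentry : ∀ (pi pj : Fin k) (m l : Fin q),
      B (pi, m) (pj, l) =
        (∑ i' : Fin k, if Fin.castAdd s i' ∈ I then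
            (if pi = i' ∧ pj = i' ∧ m = l then (1 : ℝ) else 0) else 0)
        + ∑ j : Fin s, if Fin.natAdd k j ∈ I then
            (r pi j * r pj j *
              if a j * b pi + (m : ℕ) = a j * b pj + (l : ℕ) then (1 : ℝ) else 0) else 0 := by
    intro pi pj m l
    subst hB
    rw [Matrix.sum_apply]
    have step : ∀ ℓ : Fin (k + s),
        (if hℓ : (ℓ : ℕ) < k
          then Gmsg ⟨(ℓ : ℕ), hℓ⟩ * (Gmsg ⟨(ℓ : ℕ), hℓ⟩)ᵀ
          else (fun P => P * Pᵀ) (Gpar ⟨(ℓ : ℕ) - k, by have := ℓ.isLt; omega⟩))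
            (pi, m) (pj, l) =
        if hℓ : (ℓ : ℕ) < k
          then (if pi = ⟨(ℓ : ℕ), hℓ⟩ ∧ pj = ⟨(ℓ : ℕ), hℓ⟩ ∧ m = l then (1 : ℝ) else 0)
          else (r pi ⟨(ℓ : ℕ) - k, by have := ℓ.isLt; omega⟩ *
                r pj ⟨(ℓ : ℕ) - k, by have := ℓ.isLt; omega⟩ *
              if a ⟨(ℓ : ℕ) - k, by have := ℓ.isLt; omega⟩ * b pi + (m : ℕ)
                 = a ⟨(ℓ : ℕ) - k, by have := ℓ.isLt; omega⟩ * b pj + (l : ℕ)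
                then (1 : ℝ) else 0) := by
      intro ℓ
      by_cases hℓ : (ℓ : ℕ) < k
      · rw [dif_pos hℓ, dif_pos hℓ, Matrix.mul_apply]
        set ℓ' : Fin k := ⟨(ℓ : ℕ), hℓ⟩
        simp only [Matrix.transpose_apply, hGmsg]
        by_cases h1 : pi = ℓ'
        · by_cases h2 : pj = ℓ'
          · simp [h1, h2, ite_and, Finset.sum_ite_eq]
          · simp [h2]
        · simp [h1]
      · rw [dif_neg hℓ, dif_neg hℓ]
        simp only
        rw [Matrix.mul_apply]
        set j : Fin s := ⟨(ℓ : ℕ) - k, by have := ℓ.isLt; omega⟩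
        simp only [Matrix.transpose_apply, hGpar]
        have hlt : a j * b pi + (m : ℕ) < q + a j * b ⟨k - 1, by omega⟩ := by
          have h1 := hble pi
          have h2 := m.isLt
          have h3 := Nat.mul_le_mul_left (a j) h1
          omega
        rw [Finset.sum_eq_single (⟨a j * b pi + (m : ℕ), hlt⟩ : Fin _)]
        · by_cases h : a j * b pi + (m : ℕ) = a j * b pj + (l : ℕ) <;>
            simp [h] <;> ring
        · intro c _ hc
          have hc' : ¬ ((c : ℕ) = a j * b pi + (m : ℕ)) := fun hcc => hc (Fin.ext hcc)
          simp [hc']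
        · simp
    rw [Finset.sum_congr rfl (fun ℓ _ => step ℓ)]
    rw [show (∑ ℓ ∈ I, _) = ∑ ℓ : Fin (k + s), if ℓ ∈ I then
        (if hℓ : (ℓ : ℕ) < k
          then (if pi = ⟨(ℓ : ℕ), hℓ⟩ ∧ pj = ⟨(ℓ : ℕ), hℓ⟩ ∧ m = l then (1 : ℝ) else 0)
          else (r pi ⟨(ℓ : ℕ) - k, by have := ℓ.isLt; omega⟩ *
                r pj ⟨(ℓ : ℕ) - k, by have := ℓ.isLt; omega⟩ *
              if a ⟨(ℓ : ℕ) - k, by have := ℓ.isLt; omega⟩ * b pi + (m : ℕ)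
                 = a ⟨(ℓ : ℕ) - k, by have := ℓ.isLt; omega⟩ * b pj + (l : ℕ)
                then (1 : ℝ) else 0)) else 0
      from by rw [Finset.sum_ite_mem, Finset.univ_inter]]
    rw [Fin.sum_univ_add]
    congr 1
    · apply Finset.sum_congr rfl
      intro i' _
      have h1 : ((Fin.castAdd s i' : Fin (k + s)) : ℕ) < k := by
        simpa using i'.isLt
      rw [dif_pos h1]
      have h2 : (⟨((Fin.castAdd s i' : Fin (k + s)) : ℕ), h1⟩ : Fin k) = i' :=
        Fin.ext (by simp)
      rw [h2]
    · apply Finset.sum_congr rfl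
      intro j _
      have h1 : ¬ (((Fin.natAdd k j : Fin (k + s)) : ℕ) < k) := by simp
      rw [dif_neg h1]
      have h2 : (⟨((Fin.natAdd k j : Fin (k + s)) : ℕ) - k, by
          have := (Fin.natAdd k j).isLt; omega⟩ : Fin s) = j := Fin.ext (by simp)
      rw [h2]
  constructor
  · intro i
    ext m l
    simp only [Matrix.of_apply, Matrix.smul_apply, Matrix.one_apply, smul_eq_mul]
    rw [hBentry]
    have hsum1 : (∑ i' : Fin k, if Fin.castAdd s i' ∈ I then
        (if i = i' ∧ i = i' ∧ m = l then (1 : ℝ) else 0) else 0)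
        = if Fin.castAdd s i ∈ I then (if m = l then (1 : ℝ) else 0) else 0 := by
      rw [Finset.sum_eq_single i]
      · by_cases h : m = l <;> simp [h]
      · intro i' _ hne
        have hni : i ≠ i' := fun h => hne h.symm
        simp [hni]
      · simp
    rw [hsum1]
    have hsum2 : (∑ j : Fin s, if Fin.natAdd k j ∈ I then
        (r i j * r i j *
          if a j * b i + (m : ℕ) = a j * b i + (l : ℕ) then (1 : ℝ) else 0) else 0)
        = (∑ j : Fin s, if Fin.natAdd k j ∈ I then (r i j) ^ 2 else 0)
            * (if m = l then (1 : ℝ) else 0) := by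
      rw [Finset.sum_mul]
      apply Finset.sum_congr rfl
      intro j _
      have : (a j * b i + (m : ℕ) = a j * b i + (l : ℕ)) ↔ m = l := by
        rw [Fin.ext_iff]; omega
      by_cases h : m = l <;> by_cases hmem : Fin.natAdd k j ∈ I <;>
        simp [h, hmem, this, Fin.val_inj] <;> ring
    rw [hsum2]
    by_cases h : m = l <;> by_cases hmem : Fin.castAdd s i ∈ I <;> simp [h, hmem] <;> ring
  · intro i j' hji
    ext m l
    simp only [Matrix.of_apply, Matrix.sum_apply]
    rw [hBentry]
    have hsum1 : (∑ i' : Fin k, if Fin.castAdd s i' ∈ I then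
        (if i = i' ∧ j' = i' ∧ m = l then (1 : ℝ) else 0) else 0) = 0 := by
      apply Finset.sum_eq_zero
      intro i' _
      have : ¬ (i = i' ∧ j' = i' ∧ m = l) := by
        rintro ⟨h1, h2, -⟩
        exact absurd (h1 ▸ h2 ▸ rfl : j' = i) (ne_of_lt hji)
      simp [this]
    rw [hsum1, zero_add]
    apply Finset.sum_congr rfl
    intro j _
    by_cases hmem : Fin.natAdd k j ∈ I
    · rw [if_pos hmem, if_pos hmem, Matrix.smul_apply, hUpow, smul_eq_mul]
      have hbb : b j' ≤ b i := (hb hji).le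
      have hABC : a j * b j' + a j * (b i - b j') = a j * b i := by
        rw [← Nat.mul_add, Nat.add_sub_cancel' hbb]
      have hiff : (a j * b i + (m : ℕ) = a j * b j' + (l : ℕ))
          ↔ ((l : ℕ) = (m : ℕ) + a j * (b i - b j')) := by omega
      by_cases h : (l : ℕ) = (m : ℕ) + a j * (b i - b j')
      · rw [if_pos h, if_pos (hiff.mpr h)]
      · rw [if_neg h, if_neg (fun hh => h (hiff.mp hh))]
    · simp [hmem]
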